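/- arXiv:1905.03651 — 3 statements merged into one kernel-verified Lean document; each statement's English description precedes it below -/
import Mathlib

section
/- Let L be a first-order language, and let M and A be L-structures. Suppose q : M → A is surjective, satisfies q (funMap f x) = funMap f (q ∘ x) for every function symbol f and tuple x over M, and satisfies, for every unary relation symbol P of L and every a : M, that RelMap P ![q a] holds in A iff RelMap P ![a] holds in M. A monadic clause over L with n variables is a pair (Γ, Δ) of finite lists of pairs (P, t) where P is a unary relation symbol of L and t : L.Term (Fin n); an L-structure N satisfies the clause if for every assignment β : Fin n → N, whenever RelMap P ![Term.realize β t] holds for every (P, t) ∈ Γ, then RelMap Q ![Term.realize β u] holds for some (Q, u) ∈ Δ. Then for every monadic clause over L: if M satisfies the clause, then A satisfies the clause. -/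
open FirstOrder Language Structure

/-- An `L`-structure `N` satisfies the monadic clause `(Γ, Δ)` with `n` variables:
for every assignment, if all unary atoms in the antecedent `Γ` hold, then some unary atom
in the succedent `Δ` holds. -/
def SatisfiesMonadicClause (L : FirstOrder.Language) (N : Type*) [L.Structure N]
    (n : ℕ) (Γ Δ : List ((L.Relations 1) × L.Term (Fin n))) : Prop :=
  ∀ β : Fin n → N,
    (∀ pt ∈ Γ, RelMap pt.1 ![Term.realize β pt.2]) →
    ∃ pt ∈ Δ, RelMap pt.1 ![Term.realize β pt.2]

/-- Lemma 5 of the paper: satisfaction of monadic clauses transfers from `M` to `A` along a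
surjective map `q` that commutes with all function symbols and preserves and reflects all
unary relations. -/
theorem monadic_clause_transfer {L : FirstOrder.Language} {M A : Type*}
    [L.Structure M] [L.Structure A] (q : M → A)
    (hsurj : Function.Surjective q)
    (hfun : ∀ (m : ℕ) (f : L.Functions m) (x : Fin m → M),
      q (funMap f x) = funMap f (q ∘ x))
    (hrel : ∀ (P : L.Relations 1) (a : M), RelMap P ![q a] ↔ RelMap P ![a]) :
    ∀ (n : ℕ) (Γ Δ : List ((L.Relations 1) × L.Term (Fin n))),
      SatisfiesMonadicClause L M n Γ Δ → SatisfiesMonadicClause L A n Γ Δ := by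
  have hterm : ∀ (n : ℕ) (β : Fin n → M) (t : L.Term (Fin n)),
      q (Term.realize β t) = Term.realize (q ∘ β) t := by
    intro n β t
    induction t with
    | var i => rfl
    | func f x ih =>
      simp only [Term.realize, hfun]
      congr 1
      funext i
      exact ih i
  intro n Γ Δ hM β hΓ
  obtain ⟨β', hβ'⟩ : ∃ β' : Fin n → M, q ∘ β' = β := by
    choose g hg using hsurj
    exact ⟨g ∘ β, funext fun i => hg (β i)⟩
  subst hβ'
  obtain ⟨pt, hmem, hpt⟩ := hM β' (fun pt hmem => by
    have := hΓ pt hmem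
    rwa [← hterm, hrel] at this)
  exact ⟨pt, hmem, by rw [← hterm, hrel]; exact hpt⟩
end

section
/- Let L be a first-order language whose set of unary relation symbols L.Relations 1 is finite with exactly p elements. A monadic clause over L with n variables is a pair (Γ, Δ) of finite lists of pairs (P, t) where P is a unary relation symbol of L and t : L.Term (Fin n); an L-structure N satisfies the clause if for every assignment β : Fin n → N, whenever RelMap P ![Term.realize β t] holds for every (P, t) ∈ Γ, then RelMap Q ![Term.realize β u] holds for some (Q, u) ∈ Δ. Let T be a set of monadic clauses over L, and suppose there exists an L-structure H that satisfies every clause in T and that moreover satisfies the following production condition: for every m, every function symbol f : L.Functions m, and every unary relation symbol S, there exists a set 𝒞 of patterns π : Fin m → Set (L.Relations 1) such that for every tuple s : Fin m → H, RelMap S ![funMap f s] holds if and only if there is π ∈ 𝒞 with: for every j : Fin m and every P ∈ π j, RelMap P ![s j] holds. Then there exists an L-structure A whose underlying type is finite with at most 2^p elements and which satisfies every clause in T. -/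
open FirstOrder Language Structure

/-- Theorem 1 of the paper (Finite Model Property for MSLH, semantic form): if a set `T` of
monadic clauses has a model `H` satisfying the production condition (Proposition 1), then `T`
has a finite model with at most `2^p` elements, where `p` is the number of unary predicates. -/
theorem finite_model_property_MSLH {L : FirstOrder.Language}
    [Fintype (L.Relations 1)] (p : ℕ) (hp : Fintype.card (L.Relations 1) = p)
    (T : Set (Σ n : ℕ, List ((L.Relations 1) × L.Term (Fin n)) ×
      List ((L.Relations 1) × L.Term (Fin n))))
    (H : Type*) [L.Structure H]
    (hH : ∀ c ∈ T, SatisfiesMonadicClause L H c.1 c.2.1 c.2.2)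
    (hprod : ∀ (m : ℕ) (f : L.Functions m) (S : L.Relations 1),
      ∃ 𝒞 : Set (Fin m → Set (L.Relations 1)), ∀ s : Fin m → H,
        RelMap S ![funMap f s] ↔
          ∃ π ∈ 𝒞, ∀ j : Fin m, ∀ P ∈ π j, RelMap P ![s j]) :
    ∃ (A : Type) (_ : L.Structure A) (_ : Fintype A),
      Fintype.card A ≤ 2 ^ p ∧
      ∀ c ∈ T, SatisfiesMonadicClause L A c.1 c.2.1 c.2.2 := by
  classical
  -- encode unary predicates by `Fin p`
  let e : L.Relations 1 ≃ Fin p := Fintype.equivFinOfCardEq hp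
  -- the "type" of an element of `H`
  let τ : H → Set (Fin p) := fun h => {i | RelMap (e.symm i) ![h]}
  have hτ : ∀ (P : L.Relations 1) (h : H), e P ∈ τ h ↔ RelMap P ![h] := by
    intro P h; simp [τ]
  -- the carrier
  let A : Type := Set.range τ
  have : Finite A := Subtype.finite
  let fA : Fintype A := Fintype.ofFinite A
  -- section
  let σ : A → H := fun a => a.2.choose
  have hσ : ∀ a : A, τ (σ a) = a.val := fun a => a.2.choose_spec
  let τA : H → A := fun h => ⟨τ h, Set.mem_range_self h⟩
  -- invariance of τ ∘ funMap under τ-equivalence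
  have inv : ∀ (m : ℕ) (f : L.Functions m) (s s' : Fin m → H),
      (∀ j, τ (s j) = τ (s' j)) → τ (funMap f s) = τ (funMap f s') := by
    intro m f s s' hss
    have key : ∀ (S : L.Relations 1), RelMap S ![funMap f s] ↔ RelMap S ![funMap f s'] := by
      intro S
      obtain ⟨𝒞, h𝒞⟩ := hprod m f S
      rw [h𝒞, h𝒞]
      constructor <;> rintro ⟨π, hπ, hall⟩ <;> refine ⟨π, hπ, fun j P hP => ?_⟩
      · rw [← hτ, ← hss j, hτ]; exact hall j P hP
      · rw [← hτ, hss j, hτ]; exact hall j P hP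
    ext i
    simpa [τ] using key (e.symm i)
  -- the structure on A
  letI SA : L.Structure A :=
    { funMap := fun {m} f s => τA (funMap f (fun j => σ (s j)))
      RelMap := fun {n} =>
        match n with
        | 1 => fun R v => e R ∈ (v 0).val
        | _ => fun _ _ => False }
  have hrel : ∀ (P : L.Relations 1) (a : A), RelMap (M := A) P ![a] ↔ e P ∈ a.val := by
    intro P a; rfl
  -- terms commute with τA
  have key : ∀ {n : ℕ} (t : L.Term (Fin n)) (β : Fin n → H),
      Term.realize (M := A) (fun j => τA (β j)) t = τA (Term.realize β t) := by
    intro n t β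
    induction t with
    | var j => rfl
    | func f ts ih =>
      simp only [Term.realize, SA]
      apply Subtype.ext
      show τ (funMap f fun j => σ (Term.realize (M := A) (fun j => τA (β j)) (ts j)))
        = τ (funMap f fun j => Term.realize β (ts j))
      apply inv
      intro j
      rw [ih j]
      exact hσ (τA (Term.realize β (ts j)))
  refine ⟨A, SA, fA, ?_, ?_⟩
  · calc Fintype.card A ≤ Fintype.card (Set (Fin p)) :=
          Fintype.card_le_of_injective Subtype.val Subtype.val_injective
      _ = 2 ^ p := by simp
  · rintro ⟨n, Γ, Δ⟩ hc β hΓ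
    have h := hH _ hc (fun j => σ (β j))
    have hβ : (fun j => τA (σ (β j))) = β := by
      funext j; exact Subtype.ext (hσ (β j))
    have hant : ∀ pt ∈ Γ, RelMap pt.1 ![Term.realize (fun j => σ (β j)) pt.2] := by
      intro pt hpt
      have h1 := hΓ pt hpt
      rw [hrel] at h1
      have hk := key pt.2 (fun j => σ (β j))
      rw [hβ] at hk
      rw [hk] at h1
      exact (hτ pt.1 _).1 h1
    obtain ⟨pt, hpt, hR⟩ := h hant
    refine ⟨pt, hpt, ?_⟩
    rw [hrel]
    have hk := key pt.2 (fun j => σ (β j))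
    rw [hβ] at hk
    rw [hk]
    exact (hτ pt.1 _).2 hR
end

section
/- Let D, V, W be types and let R, Rr, Ri : D → D → Prop satisfy: (1) for every a : D, Rr a a holds iff R a a holds; (2) for all a, b : D, Rr a b implies a = b; (3) for all a, b : D, Ri a b holds iff R a b holds. Let S, T : (V → D) → D and C : (V → D) → Prop, and let σ : (W → D) → (V → D) be such that S (σ γ) = T (σ γ) for every γ : W → D (σ is a unifier of S and T) and such that for every β : V → D with S β = T β there exists γ : W → D with β = σ γ (σ is most general). Then (∀ β : V → D, C β ∨ R (S β) (T β)) holds if and only if both (∀ β : V → D, C β ∨ Ri (S β) (T β)) and (∀ γ : W → D, C (σ γ) ∨ Rr (S (σ γ)) (T (σ γ))) hold. -/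
/-- Case (b) of Claim I in the proof of Lemma 7 (Reflexive Relation Splitting), positive
literal: replacing the clause `C ∨ R(s,t)` (with `s,t` unifiable by mgu `σ`) by the clauses
`C ∨ R_irr(s,t)` and `Cσ ∨ R_rfl(sσ,tσ)` preserves truth in an interpretation where `Rr`
agrees with `R` on the diagonal and holds only there, and `Ri` coincides with `R`. -/
theorem reflexive_relation_splitting_pos {D V W : Type*}
    (R Rr Ri : D → D → Prop)
    (h1 : ∀ a : D, Rr a a ↔ R a a)
    (h2 : ∀ a b : D, Rr a b → a = b)
    (h3 : ∀ a b : D, Ri a b ↔ R a b)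
    (S T : (V → D) → D) (C : (V → D) → Prop)
    (σ : (W → D) → (V → D))
    (hunif : ∀ γ : W → D, S (σ γ) = T (σ γ))
    (hmgu : ∀ β : V → D, S β = T β → ∃ γ : W → D, β = σ γ) :
    (∀ β : V → D, C β ∨ R (S β) (T β)) ↔
      ((∀ β : V → D, C β ∨ Ri (S β) (T β)) ∧
        (∀ γ : W → D, C (σ γ) ∨ Rr (S (σ γ)) (T (σ γ)))) := by
  constructor
  · intro h
    constructor
    · intro β; rcases h β with hc | hr
      · exact Or.inl hc
      · exact Or.inr ((h3 _ _).mpr hr)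
    · intro γ; rcases h (σ γ) with hc | hr
      · exact Or.inl hc
      · right; rw [hunif γ] at hr ⊢; exact (h1 _).mpr hr
  · rintro ⟨hi, hr⟩ β
    rcases hi β with hc | hR
    · exact Or.inl hc
    · have hRst := (h3 _ _).mp hR
      by_cases hst : S β = T β
      · obtain ⟨γ, rfl⟩ := hmgu β hst
        rcases hr γ with hc | hrr
        · exact Or.inl hc
        · right; rw [hunif γ] at hrr ⊢; exact (h1 _).mp hrr
      · exact Or.inr hRst
end
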